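/- arXiv:2103.06235 — 2 statements merged into one kernel-verified Lean document; each statement's English description precedes it below -/
import Mathlib

section
/- Let f, g : ℂ → ℂ be meromorphic (or holomorphic where defined) and a₁ ≠ a₂ complex numbers, and suppose that on a connected open set where all expressions are defined, f'/((f-a₁)(f-a₂)) = g'/((g-a₁)(g-a₂)). Then there exists a nonzero constant C such that (g - a₂)/(g - a₁) = C·(f - a₂)/(f - a₁) on that set. -/
theorem stmt_5 (U : Set ℂ) (hU : IsOpen U) (hUc : IsConnected U)
    (f g : ℂ → ℂ) (hf : DifferentiableOn ℂ f U) (hg : DifferentiableOn ℂ g U)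
    (a₁ a₂ : ℂ) (ha : a₁ ≠ a₂)
    (hf1 : ∀ z ∈ U, f z ≠ a₁) (hf2 : ∀ z ∈ U, f z ≠ a₂)
    (hg1 : ∀ z ∈ U, g z ≠ a₁) (hg2 : ∀ z ∈ U, g z ≠ a₂)
    (heq : ∀ z ∈ U,
      deriv f z / ((f z - a₁) * (f z - a₂)) =
      deriv g z / ((g z - a₁) * (g z - a₂))) :
    ∃ C : ℂ, C ≠ 0 ∧ ∀ z ∈ U,
      (g z - a₂) / (g z - a₁) = C * ((f z - a₂) / (f z - a₁)) := by
  set H : ℂ → ℂ := fun w => ((g w - a₂) * (f w - a₁)) / ((g w - a₁) * (f w - a₂)) with hH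
  have hA : ∀ z ∈ U, f z - a₁ ≠ 0 := fun z hz => sub_ne_zero.2 (hf1 z hz)
  have hB : ∀ z ∈ U, f z - a₂ ≠ 0 := fun z hz => sub_ne_zero.2 (hf2 z hz)
  have hC : ∀ z ∈ U, g z - a₁ ≠ 0 := fun z hz => sub_ne_zero.2 (hg1 z hz)
  have hD : ∀ z ∈ U, g z - a₂ ≠ 0 := fun z hz => sub_ne_zero.2 (hg2 z hz)
  have hH0 : ∀ z ∈ U, HasDerivAt H 0 z := by
    intro z hz
    have hfz1 := hA z hz; have hfz2 := hB z hz
    have hgz1 := hC z hz; have hgz2 := hD z hz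
    have hfd : HasDerivAt f (deriv f z) z :=
      ((hf.differentiableAt (hU.mem_nhds hz)).hasDerivAt)
    have hgd : HasDerivAt g (deriv g z) z :=
      ((hg.differentiableAt (hU.mem_nhds hz)).hasDerivAt)
    have hnum : HasDerivAt (fun w => (g w - a₂) * (f w - a₁))
        (deriv g z * (f z - a₁) + (g z - a₂) * deriv f z) z :=
      (hgd.sub_const a₂).mul (hfd.sub_const a₁)
    have hden : HasDerivAt (fun w => (g w - a₁) * (f w - a₂))
        (deriv g z * (f z - a₂) + (g z - a₁) * deriv f z) z :=
      (hgd.sub_const a₁).mul (hfd.sub_const a₂)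
    have hdz : (g z - a₁) * (f z - a₂) ≠ 0 := mul_ne_zero hgz1 hfz2
    have key : deriv f z * ((g z - a₁) * (g z - a₂)) =
        deriv g z * ((f z - a₁) * (f z - a₂)) := by
      have h := heq z hz
      rwa [div_eq_div_iff (mul_ne_zero hfz1 hfz2) (mul_ne_zero hgz1 hgz2)] at h
    have h := hnum.div hden hdz
    refine h.congr_deriv (Eq.symm ?_)
    rw [eq_comm, div_eq_zero_iff]
    left
    linear_combination (a₁ - a₂) * key
  have hHdiff : DifferentiableOn ℂ H U := fun z hz =>
    ((hH0 z hz).differentiableAt.differentiableWithinAt)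
  have hHan : AnalyticOnNhd ℂ H U := hHdiff.analyticOnNhd hU
  obtain ⟨z₀, hz₀⟩ := hUc.nonempty
  obtain ⟨r, hr, hball⟩ := Metric.isOpen_iff.1 hU z₀ hz₀
  have hconst : ∀ z ∈ Metric.ball z₀ r, H z = H z₀ := by
    intro z hz
    refine (convex_ball z₀ r).is_const_of_fderivWithin_eq_zero
      (𝕜 := ℂ) (fun w hw => ((hH0 w (hball hw)).differentiableAt.differentiableWithinAt)) ?_ hz
      (Metric.mem_ball_self hr)
    intro w hw
    have h1 : fderivWithin ℂ H (Metric.ball z₀ r) w = fderiv ℂ H w :=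
      fderivWithin_of_isOpen Metric.isOpen_ball hw
    rw [h1, (hH0 w (hball hw)).hasFDerivAt.fderiv]
    ext v; simp
  have hev : H =ᶠ[nhds z₀] fun _ => H z₀ := by
    filter_upwards [Metric.ball_mem_nhds z₀ hr] with z hz using hconst z hz
  have heqOn : Set.EqOn H (fun _ => H z₀) U :=
    hHan.eqOn_of_preconnected_of_eventuallyEq analyticOnNhd_const hUc.isPreconnected hz₀ hev
  have h01 := hA z₀ hz₀; have h02 := hB z₀ hz₀
  have h03 := hC z₀ hz₀; have h04 := hD z₀ hz₀
  refine ⟨H z₀, ?_, ?_⟩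
  · exact div_ne_zero (mul_ne_zero h04 h01) (mul_ne_zero h03 h02)
  · intro z hz
    have hfz1 := hA z hz; have hfz2 := hB z hz
    have hgz1 := hC z hz; have hgz2 := hD z hz
    have h1 : H z = H z₀ := heqOn hz
    rw [hH] at h1
    simp only at h1
    rw [div_eq_div_iff (mul_ne_zero hgz1 hfz2) (mul_ne_zero h03 h02)] at h1
    rw [hH]
    simp only
    field_simp
    linear_combination h1
end

section
/- Let h : ℂⁿ → ℂ with Dh/h = a (i.e., Dh = a·h), for D the Euler operator, and suppose G, H : ℂⁿ → ℂ satisfy the system: A = (a + C)·H, (a·(G - a₁) + DG)·(G - a₂) = A·(a₁ - a₂), and a·(G - a₁) + DG + (a + C)·(G - a₂) = (a + C)·(G - a₁), where A = DG - C·(G - a₁), C is a function, and a₁ ≠ a₂ are constants. Then a₂ = G + H. -/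
theorem stmt_9 (a C G H A DG a₁ a₂ : ℂ) (ha : a₁ ≠ a₂)
    (hA : A = DG - C * (G - a₁))
    (hac : a + C ≠ 0)
    (h1 : A = (a + C) * H)
    (h2 : (a * (G - a₁) + DG) * (G - a₂) = A * (a₁ - a₂))
    (h3 : a * (G - a₁) + DG + (a + C) * (G - a₂) = (a + C) * (G - a₁)) :
    a₂ = G + H := by
  have hd : a₁ - a₂ ≠ 0 := sub_ne_zero.mpr ha
  have key : (a + C) * H = (a + C) * (a₂ - G) := by
    have h4 : a * (G - a₁) + DG = (a + C) * (a₂ - a₁) := by linear_combination h3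
    have h5 : A * (a₁ - a₂) = (a + C) * (a₂ - G) * (a₁ - a₂) := by
      linear_combination -h2 + (G - a₂) * h4
    have h6 : A = (a + C) * (a₂ - G) := mul_right_cancel₀ hd h5
    linear_combination h6 - h1
  have h7 := mul_left_cancel₀ hac key
  linear_combination -h7
end
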